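/- arXiv:2111.13542 — 2 statements merged into one kernel-verified Lean document; each statement's English description precedes it below -/
import Mathlib

section
/- Let A be a group with action on itself. Define an action of A on itself by a·a' = a + a' - a, a'^{▷a} = a'^a, and a^{∘a'} = a^{a'} - a. Then this triple satisfies all the conditions (1_A)–(4_A) and (1_B)–(4_B) of derived actions: · is a left group action, (a'+a'')^{▷a} = a'^{▷a} + a''^{▷a}, (a+a'')^{∘a'} = a^{∘a'} + a·(a''^{∘a'}), and so on; moreover a'^{▷0} = a'. Consequently the semi-direct product A ⋉ A with (a,x)+(a',x') = (a+a', x + a + x' - a) and the action (a,x)^{(a',x')} determined by the triple is a group with action on itself. -/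
/-- A group with action on itself: a (not necessarily abelian) additive group `G`
with a map `act g h = g^h` satisfying `g^(h+h') = (g^h)^{h'}`, `g^0 = g`,
`(g+g')^h = g^h + g'^h`. -/
class Gwa (G : Type*) extends AddGroup G where
  act : G → G → G
  act_add : ∀ g h h' : G, act g (h + h') = act (act g h) h'
  act_zero : ∀ g : G, act g 0 = g
  add_act : ∀ g g' h : G, act (g + g') h = act g h + act g' h

open Gwa

/-- Morphisms of groups with action on themselves. -/
def IsGwaHom {G H : Type*} [Gwa G] [Gwa H] (f : G → H) : Prop :=
  (∀ a b : G, f (a + b) = f a + f b) ∧ ∀ a b : G, f (act a b) = act (f a) (f b)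

/-- A "group with action on itself" structure given by explicit operations. -/
structure GwaStruct (G : Type*) where
  add : G → G → G
  zero : G
  neg : G → G
  act : G → G → G
  add_assoc : ∀ a b c : G, add (add a b) c = add a (add b c)
  zero_add : ∀ a : G, add zero a = a
  add_zero : ∀ a : G, add a zero = a
  neg_add : ∀ a : G, add (neg a) a = zero
  act_add : ∀ g h h' : G, act g (add h h') = act (act g h) h'
  act_zero : ∀ g : G, act g zero = g
  add_act : ∀ g g' h : G, act (add g g') h = add (act g h) (act g' h)

section Aux
variable {A : Type*} [Gwa A]

lemma Gwa.zero_act (h : A) : act (0 : A) h = 0 := by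
  have := add_act (0 : A) 0 h
  simp only [add_zero] at this
  exact left_eq_add.mp this

lemma Gwa.neg_act (g h : A) : act (-g) h = -act g h := by
  have h1 : act (-g) h + act g h = 0 := by
    rw [← add_act, neg_add_cancel, zero_act]
  exact eq_neg_of_add_eq_zero_left h1

lemma Gwa.sub_act (g g' h : A) : act (g - g') h = act g h - act g' h := by
  rw [sub_eq_add_neg, add_act, neg_act, ← sub_eq_add_neg]

lemma Gwa.act_cancel (g h : A) : act (act g h) (-h) = g := by
  rw [← act_add, add_neg_cancel, act_zero]

lemma Gwa.act_cancel' (g h : A) : act (act g (-h)) h = g := by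
  rw [← act_add, neg_add_cancel, act_zero]

end Aux

theorem self_action_is_derived {A : Type*} [Gwa A] :
    -- the dot operation is a left group action
    (∀ b a a' : A, b + (a + a') - b = (b + a - b) + (b + a' - b)) ∧
    (∀ b b' a : A, (b + b') + a - (b + b') = b + (b' + a - b') - b) ∧
    (∀ a : A, (0 : A) + a - 0 = a) ∧
    -- (1_A)
    (∀ a a' b : A, act (a + a') b = act a b + act a' b) ∧
    -- (2_A)
    (∀ b b' a : A, act (b + b') a - (b + b') = (act b a - b) + (b + (act b' a - b') - b)) ∧
    -- (3_A)
    (∀ b a a' : A, act (b + a - b) a' + (act b a' - b) = (act b a' - b) + (b + act a a' - b)) ∧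
    -- (4_A)
    (∀ b b' a : A, act (b + a - b) b' = act b b' + act a b' - act b b') ∧
    -- (1_B)
    (∀ b a a' : A, act b (a + a') - b = act (act b a - b) a' + (act b a' - b)) ∧
    -- (2_B)
    (∀ a b b' : A, act a (b + b') = act (act a b) b') ∧
    -- (3_B)
    (∀ a a' b : A, act (act a (b + a' - b)) b = act (act a b) a') ∧
    -- (4_B)
    (∀ b b' a : A, act (act b (b' + a - b') - b) b' = act (act b b') a - act b b') ∧
    -- a'^{▷0} = a'
    (∀ a' : A, act a' (0 : A) = a') ∧
    -- consequently the semi-direct product A ⋉ A is a group with action on itself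
    (∃ s : GwaStruct (A × A),
      (∀ p q : A × A, s.add p q = (p.1 + q.1, p.2 + (p.1 + q.2 - p.1))) ∧
      s.zero = (0, 0) ∧
      (∀ p q : A × A,
        s.act p q = (act p.1 q.1, act (act p.2 q.2) q.1 + act (act p.1 q.2 - p.1) q.1))) := by
  refine ⟨?_, ?_, ?_, ?_, ?_, ?_, ?_, ?_, ?_, ?_, ?_, ?_, ?_⟩
  · intro b a a'; simp [sub_eq_add_neg, add_assoc]
  · intro b b' a; simp [sub_eq_add_neg, add_assoc]
  · intro a; simp
  · intro a a' b; rw [add_act]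
  · intro b b' a; rw [add_act]; simp [sub_eq_add_neg, add_assoc]
  · intro b a a'
    rw [sub_eq_add_neg, add_act, add_act, neg_act]
    simp [sub_eq_add_neg, add_assoc]
  · intro b b' a
    rw [sub_eq_add_neg, add_act, add_act, neg_act, ← sub_eq_add_neg]
  · intro b a a'
    rw [act_add, sub_act]
    simp [sub_eq_add_neg, add_assoc]
  · intro a b b'; rw [act_add]
  · intro a a' b
    rw [← act_add]
    have : b + a' - b + b = b + a' := by simp [sub_eq_add_neg, add_assoc]
    rw [this, act_add]
  · intro b b' a
    rw [sub_act, ← act_add]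
    have : b' + a - b' + b' = b' + a := by simp [sub_eq_add_neg, add_assoc]
    rw [this, act_add]
  · intro a'; exact act_zero a'
  · refine ⟨⟨fun p q => (p.1 + q.1, p.2 + (p.1 + q.2 - p.1)), (0, 0),
      fun p => (-p.1, -p.1 - p.2 + p.1),
      fun p q => (act p.1 q.1, act (act p.2 q.2) q.1 + act (act p.1 q.2 - p.1) q.1),
      ?_, ?_, ?_, ?_, ?_, ?_, ?_⟩, fun p q => rfl, rfl, fun p q => rfl⟩
    · intro p q r
      refine Prod.ext (add_assoc _ _ _) ?_
      simp [sub_eq_add_neg, add_assoc, neg_add_rev]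
    · intro p; refine Prod.ext (zero_add _) ?_; simp
    · intro p; refine Prod.ext (add_zero _) ?_; simp
    · intro p
      refine Prod.ext (neg_add_cancel _) ?_
      simp [sub_eq_add_neg, add_assoc]
    · intro g h h'
      refine Prod.ext (act_add _ _ _) ?_
      simp only [sub_eq_add_neg, neg_add_rev, Gwa.act_add, Gwa.add_act, Gwa.neg_act,
        Gwa.act_cancel, Gwa.act_cancel', neg_neg, add_assoc, neg_add_cancel_left]
    · intro g
      refine Prod.ext (act_zero _) ?_
      simp [Gwa.act_zero, Gwa.zero_act]
    · intro g g' h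
      refine Prod.ext (add_act _ _ _) ?_
      simp [sub_eq_add_neg, neg_add_rev, Gwa.act_add, Gwa.add_act, Gwa.neg_act,
        Gwa.act_cancel, Gwa.act_cancel', add_assoc]
end

section
/- Let A be a group with action on itself and I ⊆ A an ideal (a normal subgroup with i^a ∈ I and -a + a^i ∈ I for all i ∈ I, a ∈ A). Then the maps a·i = a + i - a, i^{▷a} = i^a, and a^{∘i} = a^i - a define a derived action of A on I, i.e. they satisfy the group action laws for ·, conditions (1_A)–(4_A) and (1_B)–(4_B), and i^{▷0_A} = i. -/
open Gwa

namespace Gwa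

variable {G : Type*} [Gwa G]

theorem zero_act_s17 (h : G) : act (0 : G) h = 0 := by
  have h0 := add_act (0 : G) 0 h
  rwa [add_zero, left_eq_add] at h0

theorem neg_act_s17 (g h : G) : act (-g) h = -act g h := by
  refine eq_neg_of_add_eq_zero_left ?_
  rw [← add_act, neg_add_cancel, zero_act_s17]

theorem sub_act_s17 (g g' h : G) : act (g - g') h = act g h - act g' h := by
  rw [sub_eq_add_neg, add_act, neg_act_s17, sub_eq_add_neg]

theorem conj_act (a g h : G) : act (a + g - a) h = act a h + act g h - act a h := by
  rw [sub_act_s17, add_act]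

theorem act_conj_act (g a h : G) : act (act g (a + h - a)) a = act (act g a) h := by
  rw [← act_add, sub_add_cancel, act_add]

end Gwa

theorem ideal_action_is_derived {A : Type*} [Gwa A] (I : AddSubgroup A)
    (hnorm : ∀ i ∈ I, ∀ a : A, a + i - a ∈ I)
    (hmem1 : ∀ i ∈ I, ∀ a : A, act i a ∈ I)
    (hmem2 : ∀ i ∈ I, ∀ a : A, -a + act a i ∈ I) :
    -- the three maps land in I
    (∀ i ∈ I, ∀ a : A, a + i - a ∈ I ∧ act i a ∈ I ∧ act a i - a ∈ I) ∧
    -- dot is a left group action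
    (∀ a : A, ∀ i ∈ I, ∀ i' ∈ I, a + (i + i') - a = (a + i - a) + (a + i' - a)) ∧
    (∀ a a' : A, ∀ i ∈ I, (a + a') + i - (a + a') = a + (a' + i - a') - a) ∧
    (∀ i ∈ I, (0 : A) + i - 0 = i) ∧
    -- (1_A)
    (∀ i ∈ I, ∀ i' ∈ I, ∀ a : A, act (i + i') a = act i a + act i' a) ∧
    -- (2_A)
    (∀ a a' : A, ∀ i ∈ I, act (a + a') i - (a + a') = (act a i - a) + (a + (act a' i - a') - a)) ∧
    -- (3_A)
    (∀ a : A, ∀ i ∈ I, ∀ i' ∈ I,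
      act (a + i - a) i' + (act a i' - a) = (act a i' - a) + (a + act i i' - a)) ∧
    -- (4_A)
    (∀ a a' : A, ∀ i ∈ I, act (a + i - a) a' = act a a' + act i a' - act a a') ∧
    -- (1_B)
    (∀ a : A, ∀ i ∈ I, ∀ i' ∈ I, act a (i + i') - a = act (act a i - a) i' + (act a i' - a)) ∧
    -- (2_B)
    (∀ i ∈ I, ∀ a a' : A, act i (a + a') = act (act i a) a') ∧
    -- (3_B)
    (∀ i ∈ I, ∀ i' ∈ I, ∀ a : A, act (act i (a + i' - a)) a = act (act i a) i') ∧
    -- (4_B)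
    (∀ a a' : A, ∀ i ∈ I, act (act a (a' + i - a') - a) a' = act (act a a') i - act a a') ∧
    -- i^{▷0_A} = i
    (∀ i ∈ I, act i (0 : A) = i) := by
  refine ⟨fun i hi a => ⟨hnorm i hi a, hmem1 i hi a, ?_⟩, ?_, ?_, ?_,
    fun i _ i' _ a => add_act i i' a, ?_, ?_, fun a a' i _ => conj_act a i a', ?_,
    fun i _ a a' => act_add i a a', fun i _ i' _ a => act_conj_act i a i', ?_,
    fun i _ => act_zero i⟩
  · simpa [add_assoc] using hnorm _ (hmem2 i hi a) a
  · intro a i _ i' _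
    simp [sub_eq_add_neg, add_assoc]
  · intro a a' i _
    simp [sub_eq_add_neg, add_assoc]
  · intro i _
    simp
  · intro a a' i _
    simp [add_act, sub_eq_add_neg, add_assoc]
  · intro a i _ i' _
    rw [conj_act]
    simp [sub_eq_add_neg, add_assoc]
  · intro a i _ i' _
    rw [sub_act_s17, ← act_add]
    simp [sub_eq_add_neg, add_assoc]
  · intro a a' i _
    rw [sub_act_s17, act_conj_act]
end
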